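/- arXiv:math/0411167 — 6 statements merged into one kernel-verified Lean document; each statement's English description precedes it below -/
import Mathlib

section
/- For all integers k, l with 1 ≤ l ≤ k, there exists an unsatisfiable k-CNF formula in which every variable occurs at most 2^k · ((1 − 2^{−l})^{⌊k/l⌋} + 2^{−l}) times. Consequently f(k) ≤ 2^k · min_{1 ≤ l ≤ k} ((1 − 2^{−l})^{⌊k/l⌋} + 2^{−l}). -/
/-- Variables come from a fixed countably infinite set. -/
abbrev Var : Type := ℕ

/-- A literal is a pair of a variable and a Boolean polarity. -/
abbrev Lit : Type := Var × Bool

/-- A clause is a finite set of literals. -/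
abbrev Clause : Type := Finset Lit

/-- A CNF formula is a finite set of clauses. -/
abbrev CNFFormula : Type := Finset Clause

/-- A truth assignment maps each variable to a Boolean. -/
abbrev Assignment : Type := Var → Bool

/-- An assignment satisfies a clause iff it satisfies at least one literal. -/
def SatClause (σ : Assignment) (c : Clause) : Prop := ∃ l ∈ c, σ l.1 = l.2

/-- An assignment satisfies a formula iff it satisfies every clause. -/
def SatCNF (σ : Assignment) (F : CNFFormula) : Prop := ∀ c ∈ F, SatClause σ c

/-- A formula is unsatisfiable if no assignment satisfies it. -/
def Unsat (F : CNFFormula) : Prop := ∀ σ : Assignment, ¬ SatCNF σ F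

/-- The number of occurrences of a variable `v` in `F`:
the number of clauses of `F` that contain `(v, true)` or `(v, false)`. -/
def occNum (v : Var) (F : CNFFormula) : ℕ :=
  (F.filter (fun c => (v, true) ∈ c ∨ (v, false) ∈ c)).card

/-- A `k`-CNF formula: every clause has exactly `k` literals. -/
def IsKCNF (k : ℕ) (F : CNFFormula) : Prop := ∀ c ∈ F, c.card = k

/-- The set of variables occurring in a formula. -/
def varsCNF (F : CNFFormula) : Finset Var := F.biUnion fun c => c.image Prod.fst

/-- The product of two formulas: `{c₁ ∪ c₂ : c₁ ∈ F₁, c₂ ∈ F₂}`. -/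
def prodCNF (F₁ F₂ : CNFFormula) : CNFFormula :=
  F₁.biUnion fun c₁ => F₂.image fun c₂ => c₁ ∪ c₂

/-- `f(k)`: the largest `s` such that every `(k,s)`-CNF formula is satisfiable. -/
noncomputable def fmax (k : ℕ) : ℕ :=
  sSup {s : ℕ | ∀ F : CNFFormula, IsKCNF k F → (∀ v : Var, occNum v F ≤ s) →
    ∃ σ : Assignment, SatCNF σ F}

/-- The complete formula `K(X)`: all `2^|X|` clauses choosing a polarity
for each variable of `X`. -/
def Kfull (X : Finset Var) : CNFFormula :=
  (X ×ˢ (Finset.univ : Finset Bool)).powerset.filter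
    (fun c => c.image Prod.fst = X ∧ c.card = X.card)

/-- The all-positive clause on `X`. -/
def allPos (X : Finset Var) : Clause := X.image fun v => (v, true)

/-- `K⁻(X)`: the complete formula minus the all-positive clause. -/
def Kminus (X : Finset Var) : CNFFormula := Kfull X \ {allPos X}

/-- `F'`: clauses of size strictly less than `k` (incomplete clauses). -/
def Fprime (k : ℕ) (F : CNFFormula) : CNFFormula := F.filter fun c => c.card < k

/-- `F''`: clauses of size exactly `k` (complete clauses). -/
def Fdprime (k : ℕ) (F : CNFFormula) : CNFFormula := F.filter fun c => c.card = k

/-- Renaming the variables of a formula along `ρ`. -/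
def renameCNF (ρ : Var → Var) (F : CNFFormula) : CNFFormula :=
  F.image fun c => c.image fun l => (ρ l.1, l.2)

/-- The composition `F₁ ∘ F₂` using fresh variables `X` (with `|X| = k - k₂`) and,
for each clause `c ∈ K⁻(X)`, a copy of `F₁` renamed along `ρ c`. -/
def compose (k : ℕ) (F₁ F₂ : CNFFormula) (X : Finset Var)
    (ρ : Clause → Var → Var) : CNFFormula :=
  ((Kminus X).biUnion fun c =>
      prodCNF (Fprime k (renameCNF (ρ c) F₁)) {c} ∪ Fdprime k (renameCNF (ρ c) F₁))
    ∪ prodCNF (Fprime k F₂) {allPos X} ∪ Fdprime k F₂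

namespace Stmt1Aux

def clOf (S T : Finset ℕ) : Clause := S.image fun v => (v, decide (v ∈ T))

lemma mem_clOf {v : ℕ} {b : Bool} {S T : Finset ℕ} :
    (v, b) ∈ clOf S T ↔ v ∈ S ∧ b = decide (v ∈ T) := by
  simp only [clOf, Finset.mem_image, Prod.mk.injEq]
  constructor
  · rintro ⟨a, ha, rfl, rfl⟩; exact ⟨ha, rfl⟩
  · rintro ⟨hv, rfl⟩; exact ⟨v, hv, rfl, rfl⟩

lemma card_clOf (S T : Finset ℕ) : (clOf S T).card = S.card :=
  Finset.card_image_of_injective _ (fun a b h => congrArg Prod.fst h)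

lemma occ_clOf {v : ℕ} {S T : Finset ℕ} :
    ((v, true) ∈ clOf S T ∨ (v, false) ∈ clOf S T) ↔ v ∈ S := by
  constructor
  · rintro (h | h) <;> exact (mem_clOf.mp h).1
  · intro h
    cases hd : decide (v ∈ T)
    · exact Or.inr (mem_clOf.mpr ⟨h, hd.symm⟩)
    · exact Or.inl (mem_clOf.mpr ⟨h, hd.symm⟩)

lemma not_sat_clOf {σ : Assignment} {S T : Finset ℕ}
    (h : ∀ v ∈ S, (v ∈ T ↔ σ v = false)) : ¬ SatClause σ (clOf S T) := by
  rintro ⟨⟨v, b⟩, hmem, hv⟩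
  obtain ⟨hvS, rfl⟩ := mem_clOf.mp hmem
  have hiff := h v hvS
  simp only at hv
  cases hσ : σ v with
  | true =>
    have hnot : ¬ (v ∈ T) := fun hT => by simp [hiff.mp hT] at hσ
    rw [hσ] at hv
    simp [hnot] at hv
  | false =>
    have hT : v ∈ T := hiff.mpr hσ
    rw [hσ] at hv
    simp [hT] at hv

def Xb (l i : ℕ) : Finset ℕ := Finset.Ico (i*l) (i*l + l)
def Pb (k l m i : ℕ) : Finset ℕ := Finset.Ico (m*l + i*(k-l)) (m*l + i*(k-l) + (k-l))
def Yb (k l m : ℕ) : Finset ℕ := Finset.Ico (m*k) (m*k + (k - m*l))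
def SA (k l m i : ℕ) : Finset ℕ := Xb l i ∪ Pb k l m i
def SB (k l m : ℕ) : Finset ℕ := Finset.range (m*l) ∪ Yb k l m

lemma card_Xb (l i : ℕ) : (Xb l i).card = l := by simp [Xb]
lemma card_Pb (k l m i : ℕ) : (Pb k l m i).card = k - l := by simp [Pb]
lemma card_Yb (k l m : ℕ) : (Yb k l m).card = k - m*l := by simp [Yb]

lemma mem_Xb_lt {l m i v : ℕ} (hi : i < m) (hv : v ∈ Xb l i) : v < m * l := by
  rw [Xb, Finset.mem_Ico] at hv
  have h1 : i*l + l ≤ m*l := by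
    calc i*l + l = (i+1)*l := by ring
    _ ≤ m*l := Nat.mul_le_mul_right l hi
  linarith [hv.2]

lemma mem_Pb_ge {k l m i v : ℕ} (hv : v ∈ Pb k l m i) : m * l ≤ v := by
  rw [Pb, Finset.mem_Ico] at hv
  linarith [hv.1, Nat.zero_le (i*(k-l))]

lemma mem_Yb_ge {k l m v : ℕ} (hv : v ∈ Yb k l m) : m * k ≤ v := by
  rw [Yb, Finset.mem_Ico] at hv
  exact hv.1

lemma SA_disj {k l m i j v : ℕ} (hij : i < j) (hj : j < m)
    (hvi : v ∈ SA k l m i) (hvj : v ∈ SA k l m j) : False := by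
  have h1 : i*l + l ≤ j*l := by
    calc i*l + l = (i+1)*l := by ring
    _ ≤ j*l := Nat.mul_le_mul_right l hij
  have h2 : i*(k-l) + (k-l) ≤ j*(k-l) := by
    calc i*(k-l) + (k-l) = (i+1)*(k-l) := by ring
    _ ≤ j*(k-l) := Nat.mul_le_mul_right (k-l) hij
  have h3 : j*l + l ≤ m*l := by
    calc j*l + l = (j+1)*l := by ring
    _ ≤ m*l := Nat.mul_le_mul_right l hj
  simp only [SA, Xb, Pb, Finset.mem_union, Finset.mem_Ico] at hvi hvj
  rcases hvi with ⟨a1, a2⟩ | ⟨a1, a2⟩ <;> rcases hvj with ⟨b1, b2⟩ | ⟨b1, b2⟩ <;>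
    linarith [Nat.zero_le (i*(k-l)), Nat.zero_le (j*(k-l))]

lemma SA_uniq {k l m i j v : ℕ} (hi : i < m) (hj : j < m)
    (hvi : v ∈ SA k l m i) (hvj : v ∈ SA k l m j) : i = j := by
  rcases lt_trichotomy i j with h | h | h
  · exact absurd (SA_disj h hj hvi hvj) not_false
  · exact h
  · exact absurd (SA_disj h hi hvj hvi) not_false

lemma Xb_Pb_disjoint {k l m i : ℕ} (hi : i < m) : Disjoint (Xb l i) (Pb k l m i) := by
  rw [Finset.disjoint_left]
  intro v hv hv'
  exact absurd (mem_Xb_lt hi hv) (not_lt.mpr (mem_Pb_ge hv'))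

lemma SA_card {k l m i : ℕ} (hlk : l ≤ k) (hi : i < m) : (SA k l m i).card = k := by
  rw [SA, Finset.card_union_of_disjoint (Xb_Pb_disjoint hi), card_Xb, card_Pb]
  omega

lemma SB_card {k l m : ℕ} (hlk : l ≤ k) (hml : m*l ≤ k) : (SB k l m).card = k := by
  rw [SB, Finset.card_union_of_disjoint, Finset.card_range, card_Yb]
  · omega
  · rw [Finset.disjoint_left]
    intro v hv hv'
    rw [Finset.mem_range] at hv
    have h1 : m*l ≤ m*k := Nat.mul_le_mul_left m hlk
    have h2 := mem_Yb_ge hv'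
    omega

def gA (k l m i : ℕ) : CNFFormula :=
  (Pb k l m i).powerset.image fun T => clOf (SA k l m i) T
def Apart (k l m : ℕ) : CNFFormula := (Finset.range m).biUnion (gA k l m)
def Bidx (l m : ℕ) : Finset ((i : ℕ) → i ∈ Finset.range m → Finset ℕ) :=
  (Finset.range m).pi fun i => (Xb l i).powerset.filter Finset.Nonempty
def Bpart (k l m : ℕ) : CNFFormula :=
  ((Bidx l m) ×ˢ (Yb k l m).powerset).image fun fU =>
    clOf (SB k l m) (((Finset.range m).attach.biUnion fun i => fU.1 i.1 i.2) ∪ fU.2)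
def Ff (k l m : ℕ) : CNFFormula := Apart k l m ∪ Bpart k l m

lemma kcnf {k l m : ℕ} (hlk : l ≤ k) (hml : m*l ≤ k) : IsKCNF k (Ff k l m) := by
  intro c hc
  rcases Finset.mem_union.mp hc with hA | hB
  · obtain ⟨i, hi, hci⟩ := Finset.mem_biUnion.mp hA
    obtain ⟨T, _, rfl⟩ := Finset.mem_image.mp hci
    rw [card_clOf, SA_card hlk (Finset.mem_range.mp hi)]
  · obtain ⟨fU, _, rfl⟩ := Finset.mem_image.mp hB
    rw [card_clOf, SB_card hlk hml]


lemma occA_le {k l m : ℕ} (v : ℕ) : occNum v (Apart k l m) ≤ 2^(k-l) := by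
  classical
  rw [occNum]
  by_cases h : ∃ i, i < m ∧ v ∈ SA k l m i
  · obtain ⟨i0, hi0, hv0⟩ := h
    have hsub : (Apart k l m).filter (fun c => (v, true) ∈ c ∨ (v, false) ∈ c)
        ⊆ gA k l m i0 := by
      intro c hc
      rw [Finset.mem_filter] at hc
      obtain ⟨hcA, hocc⟩ := hc
      obtain ⟨j, hj, hcj⟩ := Finset.mem_biUnion.mp hcA
      obtain ⟨T, hT, rfl⟩ := Finset.mem_image.mp hcj
      have hvS : v ∈ SA k l m j := occ_clOf.mp hocc
      have hji : j = i0 := SA_uniq (Finset.mem_range.mp hj) hi0 hvS hv0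
      subst hji
      exact hcj
    calc ((Apart k l m).filter _).card ≤ (gA k l m i0).card := Finset.card_le_card hsub
    _ ≤ (Pb k l m i0).powerset.card := Finset.card_image_le
    _ = 2^(k-l) := by rw [Finset.card_powerset, card_Pb]
  · have : (Apart k l m).filter (fun c => (v, true) ∈ c ∨ (v, false) ∈ c) = ∅ := by
      apply Finset.eq_empty_of_forall_notMem
      intro c hc
      rw [Finset.mem_filter] at hc
      obtain ⟨hcA, hocc⟩ := hc
      obtain ⟨j, hj, hcj⟩ := Finset.mem_biUnion.mp hcA
      obtain ⟨T, hT, rfl⟩ := Finset.mem_image.mp hcj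
      exact h ⟨j, Finset.mem_range.mp hj, occ_clOf.mp hocc⟩
    rw [this]
    simp

lemma card_Bidx (l m : ℕ) : (Bidx l m).card = (2^l - 1)^m := by
  rw [Bidx, Finset.card_pi]
  have h : ∀ i, ((Xb l i).powerset.filter Finset.Nonempty).card = 2^l - 1 := by
    intro i
    have he : (Xb l i).powerset.filter Finset.Nonempty = (Xb l i).powerset.erase ∅ := by
      ext S
      simp [Finset.nonempty_iff_ne_empty, and_comm]
    rw [he, Finset.card_erase_of_mem (Finset.empty_mem_powerset _), Finset.card_powerset,
      card_Xb]
  rw [Finset.prod_congr rfl fun i _ => h i, Finset.prod_const, Finset.card_range]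

lemma occB_le {k l m : ℕ} (v : ℕ) :
    occNum v (Bpart k l m) ≤ (2^l - 1)^m * 2^(k - m*l) := by
  calc occNum v (Bpart k l m) ≤ (Bpart k l m).card := Finset.card_filter_le _ _
  _ ≤ ((Bidx l m) ×ˢ (Yb k l m).powerset).card := Finset.card_image_le
  _ = (2^l - 1)^m * 2^(k - m*l) := by
      rw [Finset.card_product, Finset.card_powerset, card_Yb, card_Bidx]

lemma occ_le {k l m : ℕ} (v : ℕ) :
    occNum v (Ff k l m) ≤ 2^(k-l) + (2^l - 1)^m * 2^(k - m*l) := by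
  have h1 : occNum v (Ff k l m) ≤ occNum v (Apart k l m) + occNum v (Bpart k l m) := by
    rw [occNum, occNum, occNum, Ff, Finset.filter_union]
    exact Finset.card_union_le _ _
  exact le_trans h1 (add_le_add (occA_le v) (occB_le v))

lemma cover {l m v : ℕ} (hl : 1 ≤ l) (hv : v < m*l) : ∃ i, i < m ∧ v ∈ Xb l i := by
  refine ⟨v / l, ?_, ?_⟩
  · exact (Nat.div_lt_iff_lt_mul (by omega)).mpr hv
  · rw [Xb, Finset.mem_Ico]
    have h1 := Nat.div_add_mod v l
    have h2 : v % l < l := Nat.mod_lt _ (by omega)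
    constructor
    · calc v / l * l = l * (v / l) := by ring
      _ ≤ v := by omega
    · calc v < l * (v / l) + l := by omega
      _ = v / l * l + l := by ring

lemma unsat {k l m : ℕ} (hl : 1 ≤ l) : Unsat (Ff k l m) := by
  intro σ hsat
  by_cases h : ∃ i, i < m ∧ ∀ x ∈ Xb l i, σ x = true
  · obtain ⟨i, hi, hall⟩ := h
    set T := (Pb k l m i).filter (fun w => σ w = false) with hT
    have hc : clOf (SA k l m i) T ∈ Ff k l m := by
      apply Finset.mem_union_left
      exact Finset.mem_biUnion.mpr ⟨i, Finset.mem_range.mpr hi,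
        Finset.mem_image.mpr ⟨T, Finset.mem_powerset.mpr (Finset.filter_subset _ _), rfl⟩⟩
    refine not_sat_clOf ?_ (hsat _ hc)
    intro w hw
    rcases Finset.mem_union.mp hw with hX | hP
    · constructor
      · intro hwT
        exact absurd ((Finset.disjoint_left.mp (Xb_Pb_disjoint hi)) hX)
          (not_not_intro (Finset.mem_filter.mp hwT).1)
      · intro hf
        rw [hall w hX] at hf
        exact absurd hf (by simp)
    · simp [hT, Finset.mem_filter, hP]
  · push_neg at h
    set f : (i : ℕ) → i ∈ Finset.range m → Finset ℕ :=
      fun i _ => (Xb l i).filter (fun w => σ w = false) with hf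
    set U := (Yb k l m).filter (fun w => σ w = false) with hU
    have hmemI : f ∈ Bidx l m := by
      rw [Bidx, Finset.mem_pi]
      intro i hi
      rw [Finset.mem_filter]
      refine ⟨Finset.mem_powerset.mpr (Finset.filter_subset _ _), ?_⟩
      obtain ⟨x, hx, hxf⟩ := h i (Finset.mem_range.mp hi)
      exact ⟨x, Finset.mem_filter.mpr ⟨hx, by simpa using hxf⟩⟩
    set T := ((Finset.range m).attach.biUnion fun i => f i.1 i.2) ∪ U with hTT
    have hc : clOf (SB k l m) T ∈ Ff k l m := by
      apply Finset.mem_union_right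
      exact Finset.mem_image.mpr ⟨(f, U), Finset.mem_product.mpr
        ⟨hmemI, Finset.mem_powerset.mpr (Finset.filter_subset _ _)⟩, rfl⟩
    refine not_sat_clOf ?_ (hsat _ hc)
    intro w hw
    constructor
    · intro hwT
      rcases Finset.mem_union.mp hwT with hw1 | hw2
      · obtain ⟨i, _, hwi⟩ := Finset.mem_biUnion.mp hw1
        exact (Finset.mem_filter.mp hwi).2
      · exact (Finset.mem_filter.mp hw2).2
    · intro hσ
      rcases Finset.mem_union.mp hw with hR | hY
      · obtain ⟨i, him, hwX⟩ := cover hl (Finset.mem_range.mp hR)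
        exact Finset.mem_union_left _ (Finset.mem_biUnion.mpr
          ⟨⟨i, Finset.mem_range.mpr him⟩, Finset.mem_attach _ _,
            Finset.mem_filter.mpr ⟨hwX, hσ⟩⟩)
      · exact Finset.mem_union_right _ (Finset.mem_filter.mpr ⟨hY, hσ⟩)


lemma Nreal {k l m : ℕ} (hlk : l ≤ k) (hml : m*l ≤ k) :
    ((2^(k-l) + (2^l - 1)^m * 2^(k - m*l) : ℕ) : ℝ)
      = 2 ^ k * ((1 - 2 ^ (-(l : ℤ))) ^ m + 2 ^ (-(l : ℤ))) := by
  have h1 : (1:ℕ) ≤ 2^l := Nat.one_le_two_pow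
  have h2 : (2:ℝ)^(-(l:ℤ)) = ((2:ℝ)^l)⁻¹ := by
    rw [zpow_neg, zpow_natCast]
  have h3 : (2:ℝ)^(k-l) = 2^k / 2^l := by
    rw [eq_div_iff (by positivity), ← pow_add, Nat.sub_add_cancel hlk]
  have h4 : (2:ℝ)^(k-m*l) = 2^k / 2^(m*l) := by
    rw [eq_div_iff (by positivity), ← pow_add, Nat.sub_add_cancel hml]
  have h5 : ((2^l - 1 : ℕ) : ℝ) = 2^l - 1 := by
    rw [Nat.cast_sub h1]; push_cast; ring
  have h6 : (1:ℝ) - ((2:ℝ)^l)⁻¹ = (2^l - 1)/2^l := by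
    field_simp
  calc ((2^(k-l) + (2^l - 1)^m * 2^(k - m*l) : ℕ) : ℝ)
      = 2^(k-l) + ((2^l - 1 : ℕ):ℝ)^m * 2^(k - m*l) := by push_cast; ring
    _ = 2^k/2^l + (2^l - 1:ℝ)^m * (2^k / 2^(m*l)) := by rw [h5, h3, h4]
    _ = 2 ^ k * ((1 - 2 ^ (-(l : ℤ))) ^ m + 2 ^ (-(l : ℤ))) := by
        rw [h2, h6, div_pow, ← pow_mul]
        have hpos : (0:ℝ) < 2^l := by positivity
        have hpos2 : (0:ℝ) < 2^(m*l) := by positivity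
        field_simp
        ring_nf

end Stmt1Aux

/-- For `1 ≤ l ≤ k` there is an unsatisfiable `k`-CNF formula in which
every variable occurs at most `2^k · ((1 - 2^{-l})^⌊k/l⌋ + 2^{-l})` times; consequently
`f(k)` is at most the minimum of this bound over `1 ≤ l ≤ k`. -/


theorem stmt1 (k l : ℕ) (hl : 1 ≤ l) (hlk : l ≤ k) :
    (∃ F : CNFFormula, IsKCNF k F ∧ Unsat F ∧
      ∀ v : Var, (occNum v F : ℝ) ≤
        2 ^ k * ((1 - 2 ^ (-(l : ℤ))) ^ (k / l) + 2 ^ (-(l : ℤ)))) ∧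
    (fmax k : ℝ) ≤ 2 ^ k * ((1 - 2 ^ (-(l : ℤ))) ^ (k / l) + 2 ^ (-(l : ℤ))) := by
  classical
  have hml : (k / l) * l ≤ k := Nat.div_mul_le_self k l
  set m := k / l with hm
  have hkcnf : IsKCNF k (Stmt1Aux.Ff k l m) := Stmt1Aux.kcnf hlk hml
  have hunsat : Unsat (Stmt1Aux.Ff k l m) := Stmt1Aux.unsat hl
  have hocc : ∀ v : Var, occNum v (Stmt1Aux.Ff k l m)
      ≤ 2^(k-l) + (2^l - 1)^m * 2^(k - m*l) := fun v => Stmt1Aux.occ_le v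
  have hNreal := Stmt1Aux.Nreal (m := m) hlk hml
  refine ⟨⟨Stmt1Aux.Ff k l m, hkcnf, hunsat, fun v => ?_⟩, ?_⟩
  · rw [← hNreal]
    exact_mod_cast hocc v
  · have hfm : fmax k ≤ 2^(k-l) + (2^l - 1)^m * 2^(k - m*l) := by
      rw [fmax]
      apply csSup_le'
      intro s hs
      simp only [Set.mem_setOf_eq] at hs
      by_contra hcon
      push_neg at hcon
      obtain ⟨σ, hσ⟩ := hs (Stmt1Aux.Ff k l m) hkcnf
        (fun v => le_trans (hocc v) (le_of_lt hcon))
      exact hunsat σ hσ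
    calc (fmax k : ℝ) ≤ ((2^(k-l) + (2^l - 1)^m * 2^(k - m*l) : ℕ) : ℝ) := by
          exact_mod_cast hfm
    _ = _ := hNreal
end

section
/- Let X₁, …, X_u be pairwise disjoint nonempty finite sets of variables. Every truth assignment that satisfies the product formula K⁻(X₁) × K⁻(X₂) × ⋯ × K⁻(X_u) assigns false to every variable of X_i for at least one index i ∈ {1,…,u}. -/
/-- The iterated product `F₁ × F₂ × ⋯ × F_u` (the formula `{∅}` consisting of the
empty clause is the identity for the product). -/
def bigProd (u : ℕ) (Fs : Fin u → CNFFormula) : CNFFormula :=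
  (List.ofFn Fs).foldr prodCNF {∅}

lemma bigProd_key (σ : Assignment) :
    ∀ u (Fs : Fin u → CNFFormula),
      (∀ i, ∃ d ∈ Fs i, ∀ l ∈ d, σ l.1 ≠ l.2) →
      ∃ d ∈ bigProd u Fs, ∀ l ∈ d, σ l.1 ≠ l.2 := by
  intro u
  induction u with
  | zero =>
    intro Fs _
    exact ⟨∅, by simp [bigProd], by simp⟩
  | succ n ih =>
    intro Fs h
    obtain ⟨d0, hd0, hf0⟩ := h 0
    obtain ⟨dr, hdr, hfr⟩ := ih (fun i => Fs i.succ) (fun i => h i.succ)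
    refine ⟨d0 ∪ dr, ?_, ?_⟩
    · have : bigProd (n+1) Fs = prodCNF (Fs 0) (bigProd n (fun i => Fs i.succ)) := by
        simp [bigProd, List.ofFn_succ]
      rw [this, prodCNF, Finset.mem_biUnion]
      exact ⟨d0, hd0, Finset.mem_image.2 ⟨dr, hdr, rfl⟩⟩
    · intro l hl
      rcases Finset.mem_union.1 hl with h' | h'
      · exact hf0 l h'
      · exact hfr l h'

/-- Any assignment satisfying `K⁻(X₁) × ⋯ × K⁻(X_u)` for pairwise
disjoint nonempty finite variable sets `X₁, …, X_u` assigns false to every variable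
of `X_i` for some `i`. -/
theorem stmt7 (u : ℕ) (X : Fin u → Finset Var)
    (hne : ∀ i, (X i).Nonempty)
    (hdisj : ∀ i j, i ≠ j → Disjoint (X i) (X j))
    (σ : Assignment)
    (hσ : SatCNF σ (bigProd u fun i => Kminus (X i))) :
    ∃ i, ∀ v ∈ X i, σ v = false := by
  by_contra hcon
  push_neg at hcon
  have key : ∀ i, ∃ d ∈ Kminus (X i), ∀ l ∈ d, σ l.1 ≠ l.2 := by
    intro i
    obtain ⟨v, hv, hvt⟩ := hcon i
    refine ⟨(X i).image (fun w => (w, !σ w)), ?_, ?_⟩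
    · rw [Kminus, Finset.mem_sdiff]
      constructor
      · rw [Kfull, Finset.mem_filter, Finset.mem_powerset]
        refine ⟨?_, ?_, ?_⟩
        · intro l hl
          obtain ⟨w, hw, rfl⟩ := Finset.mem_image.1 hl
          exact Finset.mem_product.2 ⟨hw, Finset.mem_univ _⟩
        · rw [Finset.image_image]
          exact Finset.image_id
        · exact Finset.card_image_of_injOn (fun a _ b _ h => congrArg Prod.fst h)
      · simp only [Finset.mem_singleton]
        intro heq
        have : (v, !σ v) ∈ allPos (X i) := by
          rw [← heq]
          exact Finset.mem_image.2 ⟨v, hv, rfl⟩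
        simp [allPos, hvt] at this
    · intro l hl
      obtain ⟨w, _, rfl⟩ := Finset.mem_image.1 hl
      simp
  obtain ⟨d, hd, hf⟩ := bigProd_key σ u _ key
  obtain ⟨l, hl, hsat⟩ := hσ d hd
  exact hf l hl hsat
end

section
/- Fix an integer k. Let F₁ and F₂ be unsatisfiable formulas on disjoint sets of variables, all of whose clauses have size at most k, such that F₁' is a k₁-CNF formula, F₂' is a k₂-CNF formula, and k₁ ≤ k₂ < k. Then the composition F₁ ∘ F₂ is unsatisfiable. -/
/-- The composition `F₁ ∘ F₂` of two unsatisfiable formulas (as in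
Definition 4 of the paper) is unsatisfiable. -/
theorem stmt8 (k k₁ k₂ : ℕ) (F₁ F₂ : CNFFormula) (X : Finset Var)
    (ρ : Clause → Var → Var)
    (hU1 : Unsat F₁) (hU2 : Unsat F₂)
    (hb1 : ∀ c ∈ F₁, c.card ≤ k) (hb2 : ∀ c ∈ F₂, c.card ≤ k)
    (hk1 : IsKCNF k₁ (Fprime k F₁)) (hk2 : IsKCNF k₂ (Fprime k F₂))
    (h12 : k₁ ≤ k₂) (h2k : k₂ < k)
    (hdisj : Disjoint (varsCNF F₁) (varsCNF F₂))
    (hX : X.card = k - k₂)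
    (hXdisj : Disjoint X (varsCNF F₁ ∪ varsCNF F₂))
    (hρinj : ∀ c : Clause, Function.Injective (ρ c))
    (hcopydisj : ∀ c ∈ Kminus X,
      Disjoint (varsCNF (renameCNF (ρ c) F₁)) (varsCNF F₂ ∪ X))
    (hcopypair : ∀ c ∈ Kminus X, ∀ c' ∈ Kminus X, c ≠ c' →
      Disjoint (varsCNF (renameCNF (ρ c) F₁)) (varsCNF (renameCNF (ρ c') F₁))) :
    Unsat (compose k F₁ F₂ X ρ) := by
  intro σ hσ
  by_cases hpos : SatClause σ (allPos X)
  · -- some variable of X is true under σ; find a falsified clause in K⁻(X)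
    obtain ⟨l, hl, hσl⟩ := hpos
    simp only [allPos, Finset.mem_image] at hl
    obtain ⟨v, hv, rfl⟩ := hl
    simp only at hσl
    set c : Clause := X.image (fun w => (w, !σ w)) with hc
    have hfinj : Function.Injective (fun w : Var => (w, !σ w)) := by
      intro a b hab
      exact congrArg Prod.fst hab
    have hcK : c ∈ Kminus X := by
      rw [Kminus, Finset.mem_sdiff]
      constructor
      · simp only [Kfull, Finset.mem_filter, Finset.mem_powerset]
        refine ⟨?_, ?_, ?_⟩
        · intro x hx
          simp only [hc, Finset.mem_image] at hx
          obtain ⟨w, hw, rfl⟩ := hx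
          simp [Finset.mem_product, hw]
        · rw [hc, Finset.image_image]
          exact Finset.image_id'
        · rw [hc, Finset.card_image_of_injective _ hfinj]
      · simp only [Finset.mem_singleton]
        intro h
        have : ((v, !σ v) : Lit) ∈ allPos X := by
          rw [← h, hc]
          exact Finset.mem_image_of_mem _ hv
        simp only [allPos, Finset.mem_image] at this
        obtain ⟨w, _, hw⟩ := this
        have := congrArg Prod.snd hw
        simp [hσl] at this
    have hcfals : ¬ SatClause σ c := by
      rintro ⟨l, hl, hσl'⟩
      simp only [hc, Finset.mem_image] at hl
      obtain ⟨w, _, rfl⟩ := hl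
      simp at hσl'
    apply hU1 (fun w => σ (ρ c w))
    intro c' hc'
    have hrinj : Function.Injective (fun l : Lit => ((ρ c l.1, l.2) : Lit)) := by
      intro a b hab
      have h1 := congrArg Prod.fst hab
      have h2 := congrArg Prod.snd hab
      simp only at h1 h2
      exact Prod.ext (hρinj c h1) h2
    set rc' : Clause := c'.image (fun l => (ρ c l.1, l.2)) with hrc
    have hrmem : rc' ∈ renameCNF (ρ c) F₁ := Finset.mem_image_of_mem _ hc'
    have hrcard : rc'.card = c'.card := Finset.card_image_of_injective _ hrinj
    have transfer : SatClause σ rc' → SatClause (fun w => σ (ρ c w)) c' := by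
      rintro ⟨l, hl, hσl'⟩
      simp only [hrc, Finset.mem_image] at hl
      obtain ⟨m, hm, rfl⟩ := hl
      exact ⟨m, hm, hσl'⟩
    rcases lt_or_eq_of_le (hb1 c' hc') with hlt | heq
    · have hmem : rc' ∪ c ∈ compose k F₁ F₂ X ρ := by
        apply Finset.mem_union_left
        apply Finset.mem_union_left
        rw [Finset.mem_biUnion]
        refine ⟨c, hcK, Finset.mem_union_left _ ?_⟩
        simp only [prodCNF, Finset.mem_biUnion, Finset.mem_image, Finset.mem_singleton]
        exact ⟨rc', by simp [Fprime, Finset.mem_filter, hrmem, hrcard, hlt], c, rfl, rfl⟩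
      obtain ⟨l, hl, hσl'⟩ := hσ _ hmem
      rcases Finset.mem_union.mp hl with hl | hl
      · exact transfer ⟨l, hl, hσl'⟩
      · exact absurd ⟨l, hl, hσl'⟩ hcfals
    · have hmem : rc' ∈ compose k F₁ F₂ X ρ := by
        apply Finset.mem_union_left
        apply Finset.mem_union_left
        rw [Finset.mem_biUnion]
        refine ⟨c, hcK, Finset.mem_union_right _ ?_⟩
        simp [Fdprime, Finset.mem_filter, hrmem, hrcard, heq]
      exact transfer (hσ _ hmem)
  · -- all variables of X are false under σ; then σ satisfies F₂
    apply hU2 σ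
    intro c₂ hc₂
    rcases lt_or_eq_of_le (hb2 c₂ hc₂) with hlt | heq
    · have hmem : c₂ ∪ allPos X ∈ compose k F₁ F₂ X ρ := by
        apply Finset.mem_union_left
        apply Finset.mem_union_right
        simp only [prodCNF, Finset.mem_biUnion, Finset.mem_image, Finset.mem_singleton]
        exact ⟨c₂, by simp [Fprime, Finset.mem_filter, hc₂, hlt], allPos X, rfl, rfl⟩
      obtain ⟨l, hl, hσl⟩ := hσ _ hmem
      rcases Finset.mem_union.mp hl with hl | hl
      · exact ⟨l, hl, hσl⟩
      · exact absurd ⟨l, hl, hσl⟩ hpos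
    · have hmem : c₂ ∈ compose k F₁ F₂ X ρ := by
        apply Finset.mem_union_right
        simp [Fdprime, Finset.mem_filter, hc₂, heq]
      exact hσ _ hmem
end

section
/- Fix an integer k. Let F₁ and F₂ be unsatisfiable formulas on disjoint sets of variables, all of whose clauses have size at most k, such that F₁' is a k₁-CNF formula, F₂' is a k₂-CNF formula, and k₁ ≤ k₂ < k. Let s be an integer with s ≥ (2^{k−k₂} − 1)·|F₁'| + |F₂'| such that every variable occurs at most s times in F₁ and every variable occurs at most s times in F₂. Then every variable occurs at most s times in the composition F₁ ∘ F₂. -/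
section AuxHelpers

lemma mem_varsCNF_of {v : Var} {b : Bool} {c : Clause} {F : CNFFormula}
    (hc : c ∈ F) (h : (v, b) ∈ c) : v ∈ varsCNF F :=
  Finset.mem_biUnion.2 ⟨c, hc, Finset.mem_image.2 ⟨(v, b), h, rfl⟩⟩

lemma occNum_le_card (v : Var) (F : CNFFormula) : occNum v F ≤ F.card :=
  Finset.card_filter_le _ _

lemma occ_union_le (v : Var) (F G : CNFFormula) :
    occNum v (F ∪ G) ≤ occNum v F + occNum v G := by
  unfold occNum
  rw [Finset.filter_union]
  exact Finset.card_union_le _ _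

lemma occ_zero {v : Var} {F : CNFFormula} (h : ∀ c ∈ F, ∀ b : Bool, (v, b) ∉ c) :
    occNum v F = 0 := by
  unfold occNum
  rw [Finset.card_eq_zero, Finset.filter_eq_empty_iff]
  rintro c hc (h1 | h1) <;> exact h c hc _ h1

lemma occ_biUnion_le (v : Var) (S : Finset Clause) (g : Clause → CNFFormula) :
    occNum v (S.biUnion g) ≤ ∑ c ∈ S, occNum v (g c) := by
  unfold occNum
  rw [Finset.filter_biUnion]
  exact Finset.card_biUnion_le

lemma prod_singleton (F : CNFFormula) (c : Clause) :
    prodCNF F {c} = F.image (fun c₁ => c₁ ∪ c) := by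
  ext x
  simp only [prodCNF, Finset.mem_biUnion, Finset.mem_image, Finset.mem_singleton]
  constructor
  · rintro ⟨a, ha, c2, hc2, rfl⟩
    exact ⟨a, ha, by rw [hc2]⟩
  · rintro ⟨a, ha, rfl⟩
    exact ⟨a, ha, c, rfl, rfl⟩

lemma occ_prod_le_card (v : Var) (F : CNFFormula) (c : Clause) :
    occNum v (prodCNF F {c}) ≤ F.card := by
  refine (occNum_le_card _ _).trans ?_
  rw [prod_singleton]
  exact Finset.card_image_le

lemma occ_prod_le {v : Var} {c : Clause} (F : CNFFormula) (h : ∀ b : Bool, (v, b) ∉ c) :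
    occNum v (prodCNF F {c}) ≤ occNum v F := by
  rw [prod_singleton]
  unfold occNum
  have hsub : (F.image (fun c₁ => c₁ ∪ c)).filter (fun d => (v, true) ∈ d ∨ (v, false) ∈ d)
      ⊆ (F.filter (fun d => (v, true) ∈ d ∨ (v, false) ∈ d)).image (fun c₁ => c₁ ∪ c) := by
    intro x hx
    simp only [Finset.mem_filter, Finset.mem_image] at hx ⊢
    obtain ⟨⟨c₁, hc₁, rfl⟩, hv⟩ := hx
    refine ⟨c₁, ⟨hc₁, ?_⟩, rfl⟩
    rcases hv with h1 | h1 <;> rw [Finset.mem_union] at h1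
    · exact Or.inl (h1.resolve_right (h true))
    · exact Or.inr (h1.resolve_right (h false))
  exact le_trans (Finset.card_le_card hsub) Finset.card_image_le

lemma occ_split (k : ℕ) (v : Var) (F : CNFFormula) :
    occNum v (Fprime k F) + occNum v (Fdprime k F) ≤ occNum v F := by
  classical
  have hd : Disjoint ((Fprime k F).filter (fun d => (v, true) ∈ d ∨ (v, false) ∈ d))
      ((Fdprime k F).filter (fun d => (v, true) ∈ d ∨ (v, false) ∈ d)) := by
    rw [Finset.disjoint_left]
    intro a ha hb
    simp only [Fprime, Fdprime, Finset.mem_filter] at ha hb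
    omega
  have hsub : (Fprime k F).filter (fun d => (v, true) ∈ d ∨ (v, false) ∈ d)
      ∪ (Fdprime k F).filter (fun d => (v, true) ∈ d ∨ (v, false) ∈ d)
      ⊆ F.filter (fun d => (v, true) ∈ d ∨ (v, false) ∈ d) := by
    intro a ha
    rcases Finset.mem_union.1 ha with ha | ha <;>
      simp only [Fprime, Fdprime, Finset.mem_filter] at ha ⊢ <;>
      exact ⟨ha.1.1, ha.2⟩
  unfold occNum
  rw [← Finset.card_union_of_disjoint hd]
  exact Finset.card_le_card hsub

lemma occ_rename_le {ρ : Var → Var} (hρ : Function.Injective ρ) {F : CNFFormula} {s : ℕ}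
    (h : ∀ u : Var, occNum u F ≤ s) (v : Var) : occNum v (renameCNF ρ F) ≤ s := by
  classical
  by_cases hv : ∃ u, ρ u = v
  · obtain ⟨u, rfl⟩ := hv
    refine le_trans ?_ (h u)
    unfold occNum renameCNF
    have hsub : ((F.image (fun c => c.image fun l => (ρ l.1, l.2))).filter
          (fun d => (ρ u, true) ∈ d ∨ (ρ u, false) ∈ d))
        ⊆ (F.filter (fun d => (u, true) ∈ d ∨ (u, false) ∈ d)).image
          (fun c => c.image fun l => (ρ l.1, l.2)) := by
      intro x hx
      simp only [Finset.mem_filter, Finset.mem_image] at hx ⊢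
      obtain ⟨⟨c, hc, rfl⟩, hvb⟩ := hx
      refine ⟨c, ⟨hc, ?_⟩, rfl⟩
      rcases hvb with h1 | h1 <;>
      · simp only [Finset.mem_image, Prod.mk.injEq] at h1
        obtain ⟨⟨w, b⟩, hl, h2, h3⟩ := h1
        cases hρ h2
        cases h3
        first | exact Or.inl hl | exact Or.inr hl
    exact le_trans (Finset.card_le_card hsub) Finset.card_image_le
  · rw [occ_zero]
    · exact Nat.zero_le _
    intro c hc b hb
    simp only [renameCNF, Finset.mem_image] at hc
    obtain ⟨c', _, rfl⟩ := hc
    simp only [Finset.mem_image, Prod.mk.injEq] at hb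
    obtain ⟨l, _, h2, _⟩ := hb
    exact hv ⟨l.1, h2⟩

lemma card_Fprime_rename_le (k : ℕ) {ρ : Var → Var} (hρ : Function.Injective ρ)
    (F : CNFFormula) : (Fprime k (renameCNF ρ F)).card ≤ (Fprime k F).card := by
  have hg : Function.Injective (fun l : Lit => (ρ l.1, l.2)) := by
    intro a b hab
    simp only [Prod.mk.injEq] at hab
    exact Prod.ext (hρ hab.1) hab.2
  have hsub : Fprime k (renameCNF ρ F) ⊆
      (Fprime k F).image (fun c => c.image fun l => (ρ l.1, l.2)) := by
    intro x hx
    simp only [Fprime, renameCNF, Finset.mem_filter, Finset.mem_image] at hx ⊢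
    obtain ⟨⟨c, hc, rfl⟩, hcard⟩ := hx
    rw [Finset.card_image_of_injective _ hg] at hcard
    exact ⟨c, ⟨hc, hcard⟩, rfl⟩
  exact le_trans (Finset.card_le_card hsub) Finset.card_image_le

lemma vars_mem_Kfull {X : Finset Var} {c : Clause} (hc : c ∈ Kfull X)
    {v : Var} {b : Bool} (h : (v, b) ∈ c) : v ∈ X := by
  simp only [Kfull, Finset.mem_filter, Finset.mem_powerset] at hc
  rw [← hc.2.1]
  exact Finset.mem_image.2 ⟨(v, b), h, rfl⟩

lemma mem_Kfull_of_Kminus {X : Finset Var} {c : Clause} (hc : c ∈ Kminus X) :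
    c ∈ Kfull X := (Finset.mem_sdiff.1 hc).1

lemma card_Kminus_le (X : Finset Var) : (Kminus X).card ≤ 2 ^ X.card - 1 := by
  classical
  have hmem : ∀ c ∈ Kfull X, c.image Prod.fst = X ∧ c.card = X.card := by
    intro c hc
    simp only [Kfull, Finset.mem_filter, Finset.mem_powerset] at hc
    exact hc.2
  have hinj : ∀ c ∈ Kfull X, Set.InjOn Prod.fst (c : Set Lit) := by
    intro c hc
    obtain ⟨h1, h2⟩ := hmem c hc
    rw [← Finset.card_image_iff, h1, h2]
  set g : Clause → Finset Var := fun c => (c.filter (fun l => l.2 = true)).image Prod.fst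
    with hgdef
  have hstar : ∀ c ∈ Kfull X, ∀ v b, (v, b) ∈ c → (b = true ↔ v ∈ g c) := by
    intro c hc v b hvb
    constructor
    · rintro rfl
      exact Finset.mem_image.2 ⟨(v, true), Finset.mem_filter.2 ⟨hvb, rfl⟩, rfl⟩
    · intro hvg
      obtain ⟨l, hl, hl1⟩ := Finset.mem_image.1 hvg
      rw [Finset.mem_filter] at hl
      have heq : l = (v, b) := hinj c hc (Finset.mem_coe.2 hl.1) (Finset.mem_coe.2 hvb) hl1
      rw [heq] at hl
      exact hl.2
  have hmaps : ∀ c ∈ Kminus X, g c ∈ X.powerset.erase X := by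
    intro c hc
    have hcK : c ∈ Kfull X := mem_Kfull_of_Kminus hc
    have hne : c ≠ allPos X := by
      have := (Finset.mem_sdiff.1 hc).2
      simpa using this
    obtain ⟨h1, h2⟩ := hmem c hcK
    have hgsub : g c ⊆ X := by
      intro v hv
      obtain ⟨l, hl, rfl⟩ := Finset.mem_image.1 hv
      rw [← h1]
      exact Finset.mem_image_of_mem _ (Finset.mem_filter.1 hl).1
    rw [Finset.mem_erase, Finset.mem_powerset]
    refine ⟨fun hEq => hne ?_, hgsub⟩
    have hsub2 : c ⊆ allPos X := by
      intro l hl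
      obtain ⟨v, b⟩ := l
      have hv1 : v ∈ X := vars_mem_Kfull hcK hl
      have hb : b = true := (hstar c hcK v b hl).2 (by rw [hEq]; exact hv1)
      rw [allPos, Finset.mem_image]
      exact ⟨v, hv1, by rw [hb]⟩
    have hcardPos : (allPos X).card = X.card :=
      Finset.card_image_of_injective _ (fun a b hab => (Prod.ext_iff.1 hab).1)
    exact Finset.eq_of_subset_of_card_le hsub2 (by rw [h2, hcardPos])
  have key : ∀ d ∈ Kfull X, ∀ d' ∈ Kfull X, g d = g d' → d ⊆ d' := by
    intro d hd d' hd' hgd l hl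
    obtain ⟨v, b⟩ := l
    have hv : v ∈ X := vars_mem_Kfull hd hl
    have : v ∈ d'.image Prod.fst := by rw [(hmem d' hd').1]; exact hv
    obtain ⟨⟨w, b'⟩, hl', hw⟩ := Finset.mem_image.1 this
    have hw' : w = v := hw
    subst hw'
    have i1 := hstar d hd _ _ hl
    have i2 := hstar d' hd' _ _ hl'
    rw [hgd] at i1
    have hbb : b = b' := by rcases b <;> rcases b' <;> simp_all
    rw [hbb]
    exact hl'
  have hinjOn : Set.InjOn g ↑(Kminus X) := by
    intro c hc c' hc' hEq
    exact Finset.Subset.antisymm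
      (key c (mem_Kfull_of_Kminus hc) c' (mem_Kfull_of_Kminus hc') hEq)
      (key c' (mem_Kfull_of_Kminus hc') c (mem_Kfull_of_Kminus hc) hEq.symm)
  calc (Kminus X).card ≤ (X.powerset.erase X).card :=
        Finset.card_le_card_of_injOn g hmaps hinjOn
    _ = 2 ^ X.card - 1 := by
        rw [Finset.card_erase_of_mem (Finset.mem_powerset_self X), Finset.card_powerset]

lemma occ_A_le (v : Var) (G : CNFFormula) (c : Clause) (k : ℕ)
    (hc : ∀ b : Bool, (v, b) ∉ c) :
    occNum v (prodCNF (Fprime k G) {c} ∪ Fdprime k G) ≤ occNum v G :=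
  (occ_union_le _ _ _).trans
    ((add_le_add (occ_prod_le _ hc) le_rfl).trans (occ_split k v G))

lemma occ_A_zero (v : Var) (G : CNFFormula) (c : Clause) (k : ℕ)
    (hG : v ∉ varsCNF G) (hc : ∀ b : Bool, (v, b) ∉ c) :
    occNum v (prodCNF (Fprime k G) {c} ∪ Fdprime k G) = 0 := by
  apply occ_zero
  intro x hx b hb
  rw [Finset.mem_union] at hx
  rcases hx with hx | hx
  · rw [prod_singleton, Finset.mem_image] at hx
    obtain ⟨c₁, hc₁, rfl⟩ := hx
    rcases Finset.mem_union.1 hb with hb | hb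
    · exact hG (mem_varsCNF_of (Finset.mem_of_mem_filter _ hc₁) hb)
    · exact hc b hb
  · exact hG (mem_varsCNF_of (Finset.mem_of_mem_filter _ hx) hb)

end AuxHelpers

/-- If every variable occurs at most `s` times in `F₁` and in `F₂`,
and `s ≥ (2^(k-k₂) - 1)·|F₁'| + |F₂'|`, then every variable occurs at most `s` times
in the composition `F₁ ∘ F₂`. -/
theorem stmt9 (k k₁ k₂ : ℕ) (F₁ F₂ : CNFFormula) (X : Finset Var)
    (ρ : Clause → Var → Var) (s : ℕ)
    (hU1 : Unsat F₁) (hU2 : Unsat F₂)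
    (hb1 : ∀ c ∈ F₁, c.card ≤ k) (hb2 : ∀ c ∈ F₂, c.card ≤ k)
    (hk1 : IsKCNF k₁ (Fprime k F₁)) (hk2 : IsKCNF k₂ (Fprime k F₂))
    (h12 : k₁ ≤ k₂) (h2k : k₂ < k)
    (hdisj : Disjoint (varsCNF F₁) (varsCNF F₂))
    (hX : X.card = k - k₂)
    (hXdisj : Disjoint X (varsCNF F₁ ∪ varsCNF F₂))
    (hρinj : ∀ c : Clause, Function.Injective (ρ c))
    (hcopydisj : ∀ c ∈ Kminus X,
      Disjoint (varsCNF (renameCNF (ρ c) F₁)) (varsCNF F₂ ∪ X))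
    (hcopypair : ∀ c ∈ Kminus X, ∀ c' ∈ Kminus X, c ≠ c' →
      Disjoint (varsCNF (renameCNF (ρ c) F₁)) (varsCNF (renameCNF (ρ c') F₁)))
    (hs : (2 ^ (k - k₂) - 1) * (Fprime k F₁).card + (Fprime k F₂).card ≤ s)
    (ho1 : ∀ v : Var, occNum v F₁ ≤ s) (ho2 : ∀ v : Var, occNum v F₂ ≤ s) :
    ∀ v : Var, occNum v (compose k F₁ F₂ X ρ) ≤ s := by
  classical
  intro v
  have hcomp : compose k F₁ F₂ X ρ =
      ((Kminus X).biUnion fun c =>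
        prodCNF (Fprime k (renameCNF (ρ c) F₁)) {c} ∪ Fdprime k (renameCNF (ρ c) F₁))
      ∪ (prodCNF (Fprime k F₂) {allPos X} ∪ Fdprime k F₂) := by
    rw [compose, Finset.union_assoc]
  rw [hcomp]
  refine le_trans (occ_union_le _ _ _) ?_
  by_cases hvX : v ∈ X
  · -- Case v ∈ X
    have hBC : occNum v (prodCNF (Fprime k F₂) {allPos X} ∪ Fdprime k F₂)
        ≤ (Fprime k F₂).card := by
      refine le_trans (occ_union_le _ _ _) ?_
      have h2 : occNum v (Fdprime k F₂) = 0 := by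
        apply occ_zero
        intro c hc b hb
        have hvm : v ∈ varsCNF F₂ := mem_varsCNF_of (Finset.mem_of_mem_filter _ hc) hb
        exact Finset.disjoint_left.1 hXdisj hvX (Finset.mem_union_right _ hvm)
      rw [h2, add_zero]
      exact occ_prod_le_card _ _ _
    have hBi : occNum v ((Kminus X).biUnion fun c =>
          prodCNF (Fprime k (renameCNF (ρ c) F₁)) {c} ∪ Fdprime k (renameCNF (ρ c) F₁))
        ≤ (2 ^ (k - k₂) - 1) * (Fprime k F₁).card := by
      refine le_trans (occ_biUnion_le _ _ _) ?_
      have hterm : ∀ c ∈ Kminus X,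
          occNum v (prodCNF (Fprime k (renameCNF (ρ c) F₁)) {c}
            ∪ Fdprime k (renameCNF (ρ c) F₁)) ≤ (Fprime k F₁).card := by
        intro c hc
        refine le_trans (occ_union_le _ _ _) ?_
        have h2 : occNum v (Fdprime k (renameCNF (ρ c) F₁)) = 0 := by
          apply occ_zero
          intro d hd b hb
          have hvm : v ∈ varsCNF (renameCNF (ρ c) F₁) :=
            mem_varsCNF_of (Finset.mem_of_mem_filter _ hd) hb
          exact Finset.disjoint_left.1 (hcopydisj c hc) hvm (Finset.mem_union_right _ hvX)
        rw [h2, add_zero]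
        exact le_trans (occ_prod_le_card _ _ _) (card_Fprime_rename_le k (hρinj c) F₁)
      calc ∑ c ∈ Kminus X, occNum v (prodCNF (Fprime k (renameCNF (ρ c) F₁)) {c}
              ∪ Fdprime k (renameCNF (ρ c) F₁))
          ≤ ∑ _c ∈ Kminus X, (Fprime k F₁).card := Finset.sum_le_sum hterm
        _ = (Kminus X).card * (Fprime k F₁).card := by rw [Finset.sum_const, smul_eq_mul]
        _ ≤ (2 ^ (k - k₂) - 1) * (Fprime k F₁).card := by
            apply Nat.mul_le_mul_right
            have hcK := card_Kminus_le X
            rw [hX] at hcK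
            exact hcK
    exact le_trans (add_le_add hBi hBC) hs
  · -- Case v ∉ X
    have hnotc : ∀ c ∈ Kminus X, ∀ b : Bool, (v, b) ∉ c := by
      intro c hc b hb
      exact hvX (vars_mem_Kfull (mem_Kfull_of_Kminus hc) hb)
    have hallPos : ∀ b : Bool, (v, b) ∉ allPos X := by
      intro b hb
      simp only [allPos, Finset.mem_image] at hb
      obtain ⟨w, hw, hwb⟩ := hb
      simp only [Prod.mk.injEq] at hwb
      exact hvX (hwb.1 ▸ hw)
    by_cases hvC : ∃ c₀ ∈ Kminus X, v ∈ varsCNF (renameCNF (ρ c₀) F₁)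
    · obtain ⟨c₀, hc₀, hv₀⟩ := hvC
      have hvF₂ : v ∉ varsCNF F₂ ∪ X := Finset.disjoint_left.1 (hcopydisj c₀ hc₀) hv₀
      have hBC : occNum v (prodCNF (Fprime k F₂) {allPos X} ∪ Fdprime k F₂) = 0 :=
        occ_A_zero v F₂ (allPos X) k (fun h => hvF₂ (Finset.mem_union_left _ h)) hallPos
      have hBi : occNum v ((Kminus X).biUnion fun c =>
            prodCNF (Fprime k (renameCNF (ρ c) F₁)) {c} ∪ Fdprime k (renameCNF (ρ c) F₁))
          ≤ s := by
        refine le_trans (occ_biUnion_le _ _ _) ?_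
        rw [Finset.sum_eq_single_of_mem c₀ hc₀ (fun c hc hne => ?_)]
        · exact le_trans (occ_A_le v (renameCNF (ρ c₀) F₁) c₀ k (hnotc c₀ hc₀))
            (occ_rename_le (hρinj c₀) ho1 v)
        · refine occ_A_zero v (renameCNF (ρ c) F₁) c k (fun hv => ?_) (hnotc c hc)
          exact Finset.disjoint_left.1 (hcopypair c hc c₀ hc₀ hne) hv hv₀
      rw [hBC, add_zero]
      exact hBi
    · push_neg at hvC
      have hBi : occNum v ((Kminus X).biUnion fun c =>
            prodCNF (Fprime k (renameCNF (ρ c) F₁)) {c} ∪ Fdprime k (renameCNF (ρ c) F₁))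
          = 0 := by
        refine Nat.le_zero.1 (le_trans (occ_biUnion_le _ _ _) (le_of_eq ?_))
        exact Finset.sum_eq_zero fun c hc =>
          occ_A_zero v (renameCNF (ρ c) F₁) c k (hvC c hc) (hnotc c hc)
      rw [hBi, zero_add]
      exact le_trans (occ_A_le v F₂ (allPos X) k hallPos) (ho2 v)
end

section
/- For every integer k ≥ 4, if l is the largest integer satisfying 2^l ≤ k · (log₂ e) / (log₂ k)², then (1 − 2^{−l})^{⌊k/l⌋} ≤ 1/(k·√e). -/
set_option maxHeartbeats 1000000 in
/-- For `k ≥ 4`, if `l` is the largest (positive) integer with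
`2^l ≤ k · log₂(e) / (log₂ k)²`, then `(1 - 2^{-l})^⌊k/l⌋ ≤ 1/(k·√e)`. -/
theorem stmt14 (k l : ℕ) (hk : 4 ≤ k) (hl : 1 ≤ l)
    (hl1 : (2 : ℝ) ^ l ≤ (k : ℝ) * Real.logb 2 (Real.exp 1) / Real.logb 2 k ^ 2)
    (hl2 : (k : ℝ) * Real.logb 2 (Real.exp 1) / Real.logb 2 k ^ 2 < (2 : ℝ) ^ (l + 1)) :
    (1 - (2 : ℝ) ^ (-(l : ℤ))) ^ (k / l) ≤ 1 / ((k : ℝ) * Real.sqrt (Real.exp 1)) := by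
  clear hl2
  have hk0 : (0:ℝ) < k := by
    have : (4:ℝ) ≤ k := by exact_mod_cast hk
    linarith
  set L2 := Real.log 2 with hL2def
  have hL2 : 0 < L2 := Real.log_pos one_lt_two
  have hL2lt : L2 < 0.6931471808 := Real.log_two_lt_d9
  have hL2gt : 0.6931471803 < L2 := Real.log_two_gt_d9
  set a := Real.log k with hadef
  have ha : 2 * L2 ≤ a := by
    have h4 : ((2:ℝ)^2) ≤ (k:ℝ) := by
      norm_num
      exact_mod_cast hk
    have := Real.log_le_log (by norm_num) h4
    rwa [Real.log_pow] at this
    -- log (2^2) = 2 * log 2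
  have ha1 : 1 < a := by nlinarith
  have ha0 : 0 < a := by linarith
  -- rewrite hl1 in terms of a, L2
  have hlogbk : Real.logb 2 (k:ℝ) = a / L2 := rfl
  have hlogbe : Real.logb 2 (Real.exp 1) = 1 / L2 := by
    rw [Real.logb, Real.log_exp]
  have hM : (k : ℝ) * Real.logb 2 (Real.exp 1) / Real.logb 2 k ^ 2
      = (k:ℝ) * L2 / a^2 := by
    rw [hlogbk, hlogbe]
    field_simp
  rw [hM] at hl1
  -- basic consequences
  have hpowpos : (0:ℝ) < 2 ^ l := by positivity
  have hE1 : (2:ℝ)^l * a^2 ≤ (k:ℝ) * L2 := (le_div_iff₀ (by positivity)).mp hl1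
  have hl2pow : (l:ℝ) < 2^l := by exact_mod_cast Nat.lt_two_pow_self (n := l)
  have hlk : (l:ℝ) < k := by
    have f1 : (l:ℝ) * a^2 < 2^l * a^2 :=
      mul_lt_mul_of_pos_right hl2pow (by positivity)
    have f2 : (k:ℝ) * L2 < (k:ℝ) * 1 := mul_lt_mul_of_pos_left (by linarith) hk0
    have f3 : (0:ℝ) ≤ (l:ℝ) * (a^2 - 1) :=
      mul_nonneg (Nat.cast_nonneg l) (by nlinarith)
    nlinarith [f1, f2, f3, hE1]
  have hB : 2 * a^2 ≤ (k:ℝ) * L2 := by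
    have h2l : (2:ℝ) ≤ 2^l := by
      calc (2:ℝ) = 2^1 := by norm_num
      _ ≤ 2^l := pow_le_pow_right₀ one_le_two hl
    nlinarith
  -- take logs of hl1
  obtain ⟨m, hmdef⟩ : ∃ m : ℝ, m = a + Real.log L2 - 2 * Real.log a := ⟨_, rfl⟩
  have hC : (l:ℝ) * L2 ≤ m := by
    have hh := Real.log_le_log (by positivity) hl1
    rw [Real.log_pow, Real.log_div (by positivity) (by positivity),
      Real.log_mul (ne_of_gt hk0) (ne_of_gt hL2), Real.log_pow] at hh
    push_cast at hh
    rw [hmdef]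
    linarith
  have hm0 : 0 < m := by
    have : (1:ℝ) ≤ l := by exact_mod_cast hl
    nlinarith
  -- crux numeric inequality : 1 + log L2 ≤ 2 log a
  have hexp : Real.exp 1 ≤ 4 * L2 := by
    have h1 := Real.exp_one_lt_d9
    nlinarith
  have hcrux : 1 + Real.log L2 ≤ 2 * Real.log a := by
    have h1 : (1:ℝ) = Real.log (Real.exp 1) := (Real.log_exp 1).symm
    have h2 : Real.log (Real.exp 1) ≤ Real.log (4 * L2) :=
      Real.log_le_log (Real.exp_pos 1) hexp
    have h3 : Real.log (4 * L2) = Real.log 4 + Real.log L2 :=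
      Real.log_mul (by norm_num) (ne_of_gt hL2)
    have h4 : Real.log 4 = 2 * L2 := by
      rw [hL2def, show (4:ℝ) = 2^2 by norm_num, Real.log_pow]
      push_cast; ring
    have h5 : Real.log (2 * L2) ≤ Real.log a := Real.log_le_log (by positivity) ha
    have h6 : Real.log (2 * L2) = L2 + Real.log L2 := by
      rw [Real.log_mul (by norm_num) (ne_of_gt hL2), hL2def]
    linarith
  -- main algebraic inequality
  have hq : (0:ℝ) ≤ (2*a + 2) * (2 * Real.log a - Real.log L2 - 1) :=
    mul_nonneg (by linarith) (by linarith)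
  have h2m : (2*a + 2) * m ≤ 2 * a^2 := by
    rw [hmdef]; nlinarith [hq]
  have lpos : (0:ℝ) < l := by exact_mod_cast hl
  have p1 : (a + 1/2) * ((k:ℝ) * ((l:ℝ) * L2)) ≤ (a + 1/2) * ((k:ℝ) * m) :=
    mul_le_mul_of_nonneg_left (mul_le_mul_of_nonneg_left hC hk0.le)
      (by positivity)
  have p1L := mul_le_mul_of_nonneg_right p1 hL2.le
  have p2 : a^2 * ((l:ℝ) * L2) ≤ a^2 * m := mul_le_mul_of_nonneg_left hC (sq_nonneg a)
  have p3 : m / 2 ≤ a^2 - (a + 1/2) * m := by nlinarith [h2m]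
  have p4 : 2 * a^2 * (m/2) ≤ (k:ℝ) * L2 * (a^2 - (a + 1/2) * m) :=
    mul_le_mul hB p3 (by positivity) (by positivity)
  have keyL : (a + 1/2) * ((k:ℝ) * ((l:ℝ) * L2)) * L2 ≤ a^2 * ((k:ℝ) - l) * L2 := by
    nlinarith [p1L, p2, p4]
  have key : (a + 1/2) * ((k:ℝ) * ((l:ℝ) * L2)) ≤ a^2 * ((k:ℝ) - l) :=
    le_of_mul_le_mul_right keyL hL2
  -- the floor
  set n : ℕ := k / l with hndef
  have hn : (k:ℝ) - l ≤ (l:ℝ) * n := by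
    have h1 := Nat.div_add_mod k l
    have h2 : k % l < l := Nat.mod_lt k (by omega)
    have h1' : (l:ℝ) * (n:ℝ) + ((k % l : ℕ):ℝ) = k := by exact_mod_cast h1
    have h2' : ((k % l : ℕ):ℝ) < l := by exact_mod_cast h2
    linarith
  have A := mul_le_mul_of_nonneg_left hE1 (show (0:ℝ) ≤ (a + 1/2) * l by positivity)
  have C := mul_le_mul_of_nonneg_left hn (sq_nonneg a)
  have h6 : (a + 1/2) * 2^l ≤ (n:ℝ) := by
    have hq2 : ((a + 1/2) * 2^l) * (a^2 * l) ≤ (n:ℝ) * (a^2 * l) := by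
      nlinarith [A, key, C]
    exact le_of_mul_le_mul_right hq2 (by positivity)
  -- conclude
  have hx : (2:ℝ) ^ (-(l:ℤ)) = ((2:ℝ)^l)⁻¹ := by
    rw [zpow_neg, zpow_natCast]
  set x : ℝ := (2:ℝ) ^ (-(l:ℤ)) with hxdef
  have hx0 : 0 < x := by rw [hx]; positivity
  have h2l : (2:ℝ) ≤ 2^l := by
    calc (2:ℝ) = 2^1 := by norm_num
    _ ≤ 2^l := pow_le_pow_right₀ one_le_two hl
  have hx1 : x ≤ 1/2 := by
    rw [hx]
    rw [inv_le_comm₀ hpowpos (by norm_num)]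
    linarith
  have hfin : a + 1/2 ≤ x * n := by
    have := mul_le_mul_of_nonneg_right h6 (le_of_lt (inv_pos.mpr hpowpos))
    have he : (a + 1/2) * 2^l * ((2:ℝ)^l)⁻¹ = a + 1/2 := by
      field_simp
    rw [he] at this
    rw [hx]
    linarith [this]
  calc (1 - x) ^ n ≤ (Real.exp (-x)) ^ n := by
        apply pow_le_pow_left₀ (by linarith)
        linarith [Real.add_one_le_exp (-x)]
    _ = Real.exp (-(x * n)) := by
        rw [← Real.exp_nat_mul]; ring_nf
    _ ≤ Real.exp (-(a + 1/2)) := Real.exp_le_exp.mpr (by linarith)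
    _ = 1 / ((k : ℝ) * Real.sqrt (Real.exp 1)) := by
        rw [Real.exp_neg, Real.exp_add, Real.exp_log hk0,
          show Real.sqrt (Real.exp 1) = Real.exp (1/2) by
            rw [Real.exp_half]
          ]
        rw [inv_eq_one_div]
end

section
/- Let j, k, l be integers with 1 ≤ j ≤ l ≤ k and l · 2^l ≤ (log₂ e) · (k − 2l). Then 2^{k−l+j} · (1 − 2^{−(l−j+1)})^{⌊(k−l+j)/(l−j+1)⌋} ≤ 2^{k−l}. -/
lemma aux_nat (j l : ℕ) (hj : 1 ≤ j) (hjl : j ≤ l) :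
    j * (l - j + 1) * 2 ^ (l - j + 1) ≤ l * 2 ^ l := by
  have h1 : j ≤ 2 ^ (j - 1) := by
    have := Nat.lt_two_pow_self (n := j - 1)
    omega
  have h2 : 2 ^ (l - j + 1) * 2 ^ (j - 1) = 2 ^ l := by
    rw [← pow_add]; congr 1; omega
  calc j * (l - j + 1) * 2 ^ (l - j + 1)
      ≤ 2 ^ (j - 1) * l * 2 ^ (l - j + 1) := by
        apply Nat.mul_le_mul_right
        apply Nat.mul_le_mul h1 (by omega)
    _ = l * (2 ^ (l - j + 1) * 2 ^ (j - 1)) := by ring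
    _ = l * 2 ^ l := by rw [h2]

/-- For `1 ≤ j ≤ l ≤ k` with `l · 2^l ≤ log₂(e) · (k - 2l)`,
`2^(k-l+j) · (1 - 2^{-(l-j+1)})^⌊(k-l+j)/(l-j+1)⌋ ≤ 2^(k-l)`. -/
theorem stmt15 (j k l : ℕ) (hj : 1 ≤ j) (hjl : j ≤ l) (hlk : l ≤ k)
    (hcond : (l : ℝ) * 2 ^ l ≤ Real.logb 2 (Real.exp 1) * ((k : ℝ) - 2 * l)) :
    (2 : ℝ) ^ (k - l + j) *
        (1 - (2 : ℝ) ^ (-((l - j + 1 : ℕ) : ℤ))) ^ ((k - l + j) / (l - j + 1)) ≤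
      (2 : ℝ) ^ (k - l) := by
  have hlog2 : (0:ℝ) < Real.log 2 := Real.log_pos (by norm_num)
  set m : ℕ := l - j + 1 with hm
  set N : ℕ := k - l + j with hN
  set q : ℕ := N / m with hq
  have hmpos : 0 < m := by omega
  have hxpos : (0:ℝ) < (2:ℝ) ^ m := by positivity
  have hx : (2:ℝ) ^ (-(m:ℤ)) = ((2:ℝ) ^ m)⁻¹ := by
    rw [zpow_neg, zpow_natCast]
  have h2m : (2:ℝ) ≤ (2:ℝ) ^ m := by
    calc (2:ℝ) = 2 ^ 1 := (pow_one 2).symm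
    _ ≤ 2 ^ m := pow_le_pow_right₀ (by norm_num) hmpos
  have hxinv_lt : ((2:ℝ) ^ m)⁻¹ < 1 := by
    rw [inv_lt_one_iff₀]; right; linarith
  have hxinv_pos : (0:ℝ) < ((2:ℝ) ^ m)⁻¹ := by positivity
  -- real casts
  have hmr : (m:ℝ) = (l:ℝ) - j + 1 := by
    rw [hm]; push_cast [Nat.cast_sub hjl]; ring
  have hNr : (N:ℝ) = (k:ℝ) - l + j := by
    rw [hN]; push_cast [Nat.cast_sub hlk]; ring
  -- floor property
  have hqm : (N:ℝ) + 1 ≤ ((q:ℝ) + 1) * m := by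
    have hfl : N + 1 ≤ (q + 1) * m := by
      calc N + 1 = m * q + N % m + 1 := by rw [hq, Nat.div_add_mod]
        _ ≤ m * q + m := by have := Nat.mod_lt N hmpos; omega
        _ = (q + 1) * m := by ring
    exact_mod_cast hfl
  -- nat inequality, cast
  have hnat : (j:ℝ) * m * 2 ^ m ≤ (l:ℝ) * 2 ^ l := by
    have := aux_nat j l hj hjl
    exact_mod_cast this
  -- condition translated
  have hcond' : (l:ℝ) * 2 ^ l * Real.log 2 ≤ (k:ℝ) - 2 * l := by
    have hlb : Real.logb 2 (Real.exp 1) = 1 / Real.log 2 := by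
      rw [Real.logb, Real.log_exp]
    rw [hlb] at hcond
    have := mul_le_mul_of_nonneg_right hcond hlog2.le
    calc (l:ℝ) * 2 ^ l * Real.log 2 ≤ 1 / Real.log 2 * ((k:ℝ) - 2 * l) * Real.log 2 := this
    _ = (k:ℝ) - 2 * l := by field_simp
  -- key arithmetic: j * log 2 * 2^m ≤ q
  have hkey : (j:ℝ) * Real.log 2 * 2 ^ m ≤ q := by
    rw [← mul_le_mul_iff_left₀ (show (0:ℝ) < m by exact_mod_cast hmpos)]
    have hlog2le : Real.log 2 ≤ 1 := by
      have := Real.log_le_sub_one_of_pos (show (0:ℝ) < 2 by norm_num)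
      linarith
    have step1 : (j:ℝ) * Real.log 2 * 2 ^ m * m = (j:ℝ) * m * 2 ^ m * Real.log 2 := by ring
    have step2 : (j:ℝ) * m * 2 ^ m * Real.log 2 ≤ (l:ℝ) * 2 ^ l * Real.log 2 :=
      mul_le_mul_of_nonneg_right hnat hlog2.le
    have step3 : (k:ℝ) - 2 * l ≤ (q:ℝ) * m := by
      have hj0 : (1:ℝ) ≤ j := by exact_mod_cast hj
      nlinarith [hqm, hmr, hNr]
    linarith
  -- main inequality on the power
  have key : (1 - ((2:ℝ) ^ m)⁻¹) ^ q ≤ ((2:ℝ) ^ j)⁻¹ := by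
    have h1 : (1 - ((2:ℝ) ^ m)⁻¹) ^ q ≤ Real.exp (-(((2:ℝ) ^ m)⁻¹)) ^ q := by
      apply pow_le_pow_left₀ (by linarith)
      linarith [Real.add_one_le_exp (-(((2:ℝ) ^ m)⁻¹))]
    have h2 : Real.exp (-(((2:ℝ) ^ m)⁻¹)) ^ q = Real.exp ((q:ℝ) * -(((2:ℝ) ^ m)⁻¹)) :=
      (Real.exp_nat_mul _ q).symm
    have h3 : ((2:ℝ) ^ j)⁻¹ = Real.exp (-((j:ℝ) * Real.log 2)) := by
      rw [Real.exp_neg, Real.exp_nat_mul, Real.exp_log (by norm_num : (0:ℝ) < 2)]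
    rw [h3]
    refine h1.trans ?_
    rw [h2]
    apply Real.exp_le_exp.2
    have h4 : (j:ℝ) * Real.log 2 ≤ (q:ℝ) / 2 ^ m := (le_div_iff₀ hxpos).2 hkey
    rw [div_eq_mul_inv] at h4
    linarith
  -- finish
  have hsplit : (2:ℝ) ^ N = (2:ℝ) ^ (k - l) * 2 ^ j := by
    rw [hN, pow_add]
  rw [hx, hsplit]
  have hpow_pos : (0:ℝ) < (2:ℝ) ^ (k - l) := by positivity
  have h2j : (0:ℝ) < (2:ℝ) ^ j := by positivity
  calc (2:ℝ) ^ (k-l) * 2 ^ j * (1 - ((2:ℝ) ^ m)⁻¹) ^ q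
      ≤ (2:ℝ) ^ (k-l) * 2 ^ j * ((2:ℝ) ^ j)⁻¹ := by
        apply mul_le_mul_of_nonneg_left key (by positivity)
    _ = (2:ℝ) ^ (k-l) := by field_simp
end
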